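/- For any set of inclusion atoms of the form ρⁱ_𝗑 ⊆ σⁱ_𝗑 (on subsequences of 𝗑), first-order formula α and inclusion logic formula φ, the following equivalence holds in team semantics: ∃𝗑(⋀_{i∈I} ρⁱ_𝗑 ⊆ σⁱ_𝗑 ∧ α) ∨ φ ≡ ∃𝗑∃p∃q(⋀_{i∈I} ρⁱ_𝗑 pq ⊆ σⁱ_𝗑 pq ∧ (α ↔ p=q) ∧ (α ∨ φ)), where p, q are fresh variables and the model has at least two elements. -/

import Mathlib

/-! Both sides are read through the description of `∃𝗑` as "some team that agrees with `X` off `𝗑`",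
which rests on locality. From left to right, the `α`-part gets `p = q = a`; on the `φ`-part the
`𝗑`-columns and `p` are set to `a` and `q` to `a` or `b` according to `α`, so the extended inclusion
atoms hold there trivially and `α ↔ p = q` holds by construction. From right to left, the
assignments with `p = q` are exactly those satisfying `α`; since the extended atoms copy the values
of `p, q`, this subteam satisfies the original atoms and witnesses the first disjunct. -/

namespace TeamSem

variable {M : Type}

/-- A team is a set of assignments (variables are natural numbers). -/
abbrev Team (M : Type) := Set (ℕ → M)

/-- Lax existential extension of a team `X` along variable `x` by a choice function `F`. -/
def extT (X : Team M) (x : ℕ) (F : (ℕ → M) → Set M) : Team M :=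
  {t | ∃ s ∈ X, ∃ a ∈ F s, t = Function.update s x a}

/-- Universal extension of a team `X` along variable `x`. -/
def extAll (X : Team M) (x : ℕ) : Team M :=
  {t | ∃ s ∈ X, ∃ a : M, t = Function.update s x a}

/-- First-order formulas with semantic atoms depending on a finite list of variables. -/
inductive FOForm (M : Type) where
  | atom : List ℕ → (List M → Prop) → FOForm M
  | neg  : FOForm M → FOForm M
  | and  : FOForm M → FOForm M → FOForm M
  | or   : FOForm M → FOForm M → FOForm M
  | ex   : ℕ → FOForm M → FOForm M
  | all  : ℕ → FOForm M → FOForm M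

/-- Tarskian (single-assignment) satisfaction for first-order formulas. -/
def FOForm.sat : FOForm M → (ℕ → M) → Prop
  | .atom l p, s => p (l.map s)
  | .neg φ, s => ¬ FOForm.sat φ s
  | .and φ ψ, s => FOForm.sat φ s ∧ FOForm.sat ψ s
  | .or φ ψ, s => FOForm.sat φ s ∨ FOForm.sat ψ s
  | .ex x φ, s => ∃ a : M, FOForm.sat φ (Function.update s x a)
  | .all x φ, s => ∀ a : M, FOForm.sat φ (Function.update s x a)

/-- Free variables of a first-order formula. -/
def FOForm.fv : FOForm M → Set ℕ
  | .atom l _ => {v | v ∈ l}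
  | .neg φ => FOForm.fv φ
  | .and φ ψ => FOForm.fv φ ∪ FOForm.fv ψ
  | .or φ ψ => FOForm.fv φ ∪ FOForm.fv ψ
  | .ex x φ => FOForm.fv φ \ {x}
  | .all x φ => FOForm.fv φ \ {x}

/-- Formulas of inclusion logic: first-order formulas (with negation applied
only to first-order formulas), inclusion atoms, ∧, ∨, ∃, ∀. -/
inductive IncForm (M : Type) where
  | fo   : FOForm M → IncForm M
  | incl : List ℕ → List ℕ → IncForm M
  | and  : IncForm M → IncForm M → IncForm M
  | or   : IncForm M → IncForm M → IncForm M
  | ex   : ℕ → IncForm M → IncForm M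
  | all  : ℕ → IncForm M → IncForm M

/-- Lax team semantics for inclusion logic. -/
def IncForm.tsat : IncForm M → Team M → Prop
  | .fo α, X => ∀ s ∈ X, FOForm.sat α s
  | .incl xs ys, X => ∀ s ∈ X, ∃ s' ∈ X, xs.map s = ys.map s'
  | .and φ ψ, X => IncForm.tsat φ X ∧ IncForm.tsat ψ X
  | .or φ ψ, X => ∃ Y Z : Team M, X = Y ∪ Z ∧ IncForm.tsat φ Y ∧ IncForm.tsat ψ Z
  | .ex x φ, X => ∃ F : (ℕ → M) → Set M, (∀ s ∈ X, (F s).Nonempty) ∧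
      IncForm.tsat φ (extT X x F)
  | .all x φ, X => IncForm.tsat φ (extAll X x)

/-- Free variables of an inclusion logic formula. -/
def IncForm.fv : IncForm M → Set ℕ
  | .fo α => FOForm.fv α
  | .incl xs ys => {v | v ∈ xs ∨ v ∈ ys}
  | .and φ ψ => IncForm.fv φ ∪ IncForm.fv ψ
  | .or φ ψ => IncForm.fv φ ∪ IncForm.fv ψ
  | .ex x φ => IncForm.fv φ \ {x}
  | .all x φ => IncForm.fv φ \ {x}

/-- A block of existential quantifiers. -/
def IncForm.exs (l : List ℕ) (φ : IncForm M) : IncForm M := l.foldr IncForm.ex φ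

/-- A block of universal quantifiers. -/
def IncForm.alls (l : List ℕ) (φ : IncForm M) : IncForm M := l.foldr IncForm.all φ

/-- The first-order equality atom `x = y`. -/
def eqAtom (x y : ℕ) : FOForm M :=
  .atom [x, y] (fun l => match l with | [a, b] => a = b | _ => False)

/-- The first-order inequality atom `x ≠ y`. -/
def neqAtom (x y : ℕ) : FOForm M :=
  .atom [x, y] (fun l => match l with | [a, b] => a ≠ b | _ => False)

/-- First-order biconditional `α ↔ β`, i.e. `(¬α ∨ β) ∧ (¬β ∨ α)`. -/
def iffF (a b : FOForm M) : FOForm M := .and (.or (.neg a) b) (.or (.neg b) a)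

/-- Conjunction of a list of inclusion logic formulas. -/
def bigAndI (l : List (IncForm M)) : IncForm M :=
  l.foldr IncForm.and (.fo (.atom [] (fun _ => True)))

/-- Disjunction of a list of inclusion logic formulas (empty disjunction is `⊥`). -/
def bigOrI (l : List (IncForm M)) : IncForm M :=
  l.foldr IncForm.or (.fo (.atom [] (fun _ => False)))

open Function Set

theorem _root_.Set.EqOn.update_insert {α β : Type*} [DecidableEq α] {s t : α → β} {V : Set α}
    (h : EqOn s t V) (y : α) (b : β) : EqOn (update s y b) (update t y b) (insert y V) := by
  rintro v (rfl | hv)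
  · simp
  · by_cases hvy : v = y
    · simp [hvy]
    · simp [update_of_ne hvy, h hv]

theorem FOForm.sat_congr (α : FOForm M) {s t : ℕ → M} (h : EqOn s t α.fv) :
    α.sat s ↔ α.sat t := by
  induction α generalizing s t with
  | atom l P => simp only [FOForm.sat, List.map_congr_left (fun v hv => h hv)]
  | neg φ ih => simp only [FOForm.sat, ih h]
  | and φ ψ ihφ ihψ | or φ ψ ihφ ihψ =>
    simp only [FOForm.sat, ihφ (h.mono subset_union_left), ihψ (h.mono subset_union_right)]
  | ex y φ ih | all y φ ih =>
    simp only [FOForm.sat,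
      fun a => ih ((h.update_insert y a).mono (subset_insert_sdiff_singleton y φ.fv))]

def TeamEquiv (V : Set ℕ) (X Y : Team M) : Prop :=
  (∀ s ∈ X, ∃ t ∈ Y, EqOn s t V) ∧ (∀ t ∈ Y, ∃ s ∈ X, EqOn s t V)

namespace TeamEquiv

variable {U V : Set ℕ} {X Y Z : Team M}

theorem refl (V : Set ℕ) (X : Team M) : TeamEquiv V X X :=
  ⟨fun s hs => ⟨s, hs, eqOn_refl _ _⟩, fun s hs => ⟨s, hs, eqOn_refl _ _⟩⟩

theorem symm (h : TeamEquiv V X Y) : TeamEquiv V Y X :=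
  ⟨fun t ht => (h.2 t ht).imp fun _ ⟨hs, hst⟩ => ⟨hs, hst.symm⟩,
   fun s hs => (h.1 s hs).imp fun _ ⟨ht, hst⟩ => ⟨ht, hst.symm⟩⟩

theorem mono (hUV : U ⊆ V) (h : TeamEquiv V X Y) : TeamEquiv U X Y :=
  ⟨fun s hs => (h.1 s hs).imp fun _ ⟨ht, hst⟩ => ⟨ht, hst.mono hUV⟩,
   fun t ht => (h.2 t ht).imp fun _ ⟨hs, hst⟩ => ⟨hs, hst.mono hUV⟩⟩

theorem trans (h₁ : TeamEquiv U X Y) (h₂ : TeamEquiv V Y Z) : TeamEquiv (U ∩ V) X Z := by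
  refine ⟨fun s hs => ?_, fun u hu => ?_⟩
  · obtain ⟨t, ht, hst⟩ := h₁.1 s hs
    obtain ⟨u, hu, htu⟩ := h₂.1 t ht
    exact ⟨u, hu, fun v hv => (hst hv.1).trans (htu hv.2)⟩
  · obtain ⟨t, ht, htu⟩ := h₂.2 u hu
    obtain ⟨s, hs, hst⟩ := h₁.2 t ht
    exact ⟨s, hs, fun v hv => (hst hv.1).trans (htu hv.2)⟩

theorem union {X' Y' : Team M} (h : TeamEquiv V X Y) (h' : TeamEquiv V X' Y') :
    TeamEquiv V (X ∪ X') (Y ∪ Y') := by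
  refine ⟨?_, ?_⟩
  · rintro s (hs | hs)
    · obtain ⟨t, ht, hst⟩ := h.1 s hs; exact ⟨t, Or.inl ht, hst⟩
    · obtain ⟨t, ht, hst⟩ := h'.1 s hs; exact ⟨t, Or.inr ht, hst⟩
  · rintro t (ht | ht)
    · obtain ⟨s, hs, hst⟩ := h.2 t ht; exact ⟨s, Or.inl hs, hst⟩
    · obtain ⟨s, hs, hst⟩ := h'.2 t ht; exact ⟨s, Or.inr hs, hst⟩

theorem image_left {f : (ℕ → M) → ℕ → M} (hf : ∀ s, EqOn (f s) s V) (X : Team M) :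
    TeamEquiv V (f '' X) X :=
  ⟨by rintro _ ⟨s, hs, rfl⟩; exact ⟨s, hs, hf s⟩, fun s hs => ⟨f s, mem_image_of_mem f hs, hf s⟩⟩

theorem exists_union_eq (h : TeamEquiv V X (Y ∪ Z)) :
    ∃ X₁ X₂, X = X₁ ∪ X₂ ∧ TeamEquiv V X₁ Y ∧ TeamEquiv V X₂ Z := by
  refine ⟨{s ∈ X | ∃ t ∈ Y, EqOn s t V}, {s ∈ X | ∃ t ∈ Z, EqOn s t V}, ?_, ?_, ?_⟩
  · ext s
    refine ⟨fun hs => ?_, by rintro (⟨hs, -⟩ | ⟨hs, -⟩) <;> exact hs⟩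
    obtain ⟨t, ht | ht, hst⟩ := h.1 s hs
    exacts [Or.inl ⟨hs, t, ht, hst⟩, Or.inr ⟨hs, t, ht, hst⟩]
  · exact ⟨fun s ⟨_, hs⟩ => hs, fun t ht =>
      (h.2 t (Or.inl ht)).imp fun s ⟨hs, hst⟩ => ⟨⟨hs, t, ht, hst⟩, hst⟩⟩
  · exact ⟨fun s ⟨_, hs⟩ => hs, fun t ht =>
      (h.2 t (Or.inr ht)).imp fun s ⟨hs, hst⟩ => ⟨⟨hs, t, ht, hst⟩, hst⟩⟩

/-- Amalgamation: the intermediate team takes its `S`-values from `Y` and the rest from `X`. -/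
theorem exists_intermediate {S : Set ℕ} (h : TeamEquiv (U \ S) X Y) :
    ∃ Z, TeamEquiv Sᶜ X Z ∧ TeamEquiv (S ∪ U) Z Y := by
  classical
  have glued : ∀ s t : ℕ → M, EqOn s t (U \ S) → EqOn (S.piecewise t s) t (S ∪ U) := by
    intro s t hst v hv
    by_cases hvS : v ∈ S
    · exact piecewise_eq_of_mem _ _ _ hvS
    · rw [piecewise_eq_of_notMem _ _ _ hvS]
      exact hst ⟨hv.resolve_left hvS, hvS⟩
  refine ⟨{u | ∃ s ∈ X, ∃ t ∈ Y, EqOn s t (U \ S) ∧ u = S.piecewise t s}, ⟨?_, ?_⟩, ?_, ?_⟩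
  · intro s hs
    obtain ⟨t, ht, hst⟩ := h.1 s hs
    exact ⟨_, ⟨s, hs, t, ht, hst, rfl⟩, fun v hv => (piecewise_eq_of_notMem _ _ _ hv).symm⟩
  · rintro _ ⟨s, hs, t, -, -, rfl⟩
    exact ⟨s, hs, fun v hv => (piecewise_eq_of_notMem _ _ _ hv).symm⟩
  · rintro _ ⟨s, -, t, ht, hst, rfl⟩
    exact ⟨t, ht, glued s t hst⟩
  · intro t ht
    obtain ⟨s, hs, hst⟩ := h.2 t ht
    exact ⟨_, ⟨s, hs, t, ht, hst, rfl⟩, glued s t hst⟩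

theorem extAll (h : TeamEquiv V X Y) (y : ℕ) :
    TeamEquiv (insert y V) (TeamSem.extAll X y) (TeamSem.extAll Y y) := by
  refine ⟨?_, ?_⟩
  · rintro _ ⟨s, hs, a, rfl⟩
    obtain ⟨t, ht, hst⟩ := h.1 s hs
    exact ⟨_, ⟨t, ht, a, rfl⟩, hst.update_insert y a⟩
  · rintro _ ⟨t, ht, a, rfl⟩
    obtain ⟨s, hs, hst⟩ := h.2 t ht
    exact ⟨_, ⟨s, hs, a, rfl⟩, hst.update_insert y a⟩

end TeamEquiv

namespace IncForm

theorem tsat_ex_iff (y : ℕ) (φ : IncForm M) (X : Team M) :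
    (ex y φ).tsat X ↔ ∃ Y, TeamEquiv {y}ᶜ X Y ∧ φ.tsat Y := by
  constructor
  · rintro ⟨F, hF, hφ⟩
    refine ⟨extT X y F, ⟨fun s hs => ?_, ?_⟩, hφ⟩
    · obtain ⟨a, ha⟩ := hF s hs
      exact ⟨_, ⟨s, hs, a, ha, rfl⟩, fun v hv => (update_of_ne hv a s).symm⟩
    · rintro _ ⟨s, hs, a, -, rfl⟩
      exact ⟨s, hs, fun v hv => (update_of_ne hv a s).symm⟩
  · rintro ⟨Y, hXY, hφ⟩
    refine ⟨fun s => {a | ∃ t ∈ Y, EqOn s t {y}ᶜ ∧ a = t y}, fun s hs => ?_, ?_⟩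
    · obtain ⟨t, ht, hst⟩ := hXY.1 s hs
      exact ⟨t y, t, ht, hst, rfl⟩
    · convert hφ using 1
      ext u
      constructor
      · rintro ⟨s, -, _, ⟨t, ht, hst, rfl⟩, rfl⟩
        rwa [update_eq_iff.mpr ⟨rfl, fun v hv => hst hv⟩]
      · intro hu
        obtain ⟨s, hs, hsu⟩ := hXY.2 u hu
        exact ⟨s, hs, u y, ⟨u, hu, hsu, rfl⟩, (update_eq_iff.mpr ⟨rfl, fun v hv => hsu hv⟩).symm⟩

theorem tsat_of_teamEquiv (φ : IncForm M) {V : Set ℕ} {X Y : Team M} (hV : φ.fv ⊆ V)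
    (h : TeamEquiv V X Y) (hX : φ.tsat X) : φ.tsat Y := by
  induction φ generalizing V X Y with
  | fo α =>
    intro t ht
    obtain ⟨s, hs, hst⟩ := h.2 t ht
    exact (α.sat_congr (hst.mono hV)).mp (hX s hs)
  | incl xs ys =>
    intro t ht
    obtain ⟨s, hs, hst⟩ := h.2 t ht
    obtain ⟨s', hs', hss'⟩ := hX s hs
    obtain ⟨t', ht', hst'⟩ := h.1 s' hs'
    refine ⟨t', ht', ?_⟩
    calc xs.map t = xs.map s := List.map_congr_left fun v hv => (hst (hV (Or.inl hv))).symm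
      _ = ys.map s' := hss'
      _ = ys.map t' := List.map_congr_left fun v hv => hst' (hV (Or.inr hv))
  | and φ ψ ihφ ihψ =>
    exact ⟨ihφ (subset_union_left.trans hV) h hX.1, ihψ (subset_union_right.trans hV) h hX.2⟩
  | or φ ψ ihφ ihψ =>
    obtain ⟨X₁, X₂, rfl, hφ, hψ⟩ := hX
    obtain ⟨Y₁, Y₂, rfl, hXY₁, hXY₂⟩ := h.symm.exists_union_eq
    exact ⟨Y₁, Y₂, rfl, ihφ (subset_union_left.trans hV) hXY₁.symm hφ,
      ihψ (subset_union_right.trans hV) hXY₂.symm hψ⟩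
  | ex y φ ih =>
    obtain ⟨X', hXX', hφ⟩ := (tsat_ex_iff y φ X).mp hX
    obtain ⟨Y', hYY', hY'X'⟩ := (h.symm.trans hXX').exists_intermediate (U := V) (S := {y})
    exact (tsat_ex_iff y φ Y).mpr ⟨Y', hYY', ih (sdiff_subset_iff.mp hV) hY'X'.symm hφ⟩
  | all y φ ih => exact ih (sdiff_subset_iff.mp hV) (h.extAll y) hX

theorem tsat_exs_iff (l : List ℕ) (φ : IncForm M) (X : Team M) :
    (exs l φ).tsat X ↔ ∃ Y, TeamEquiv {v | v ∉ l} X Y ∧ φ.tsat Y := by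
  induction l generalizing X with
  | nil =>
    refine ⟨fun h => ⟨X, TeamEquiv.refl _ X, h⟩, fun ⟨Y, hXY, hY⟩ => ?_⟩
    exact tsat_of_teamEquiv φ (fun v _ => List.not_mem_nil) hXY.symm hY
  | cons y l ih =>
    change (ex y (exs l φ)).tsat X ↔ _
    rw [tsat_ex_iff]
    constructor
    · rintro ⟨Y, hXY, hY⟩
      obtain ⟨Z, hYZ, hZ⟩ := (ih Y).mp hY
      exact ⟨Z, (hXY.trans hYZ).mono fun v hv => by simp_all, hZ⟩
    · rintro ⟨Z, hXZ, hZ⟩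
      obtain ⟨Y, hXY, hYZ⟩ := (hXZ.mono fun v hv => by simp_all).exists_intermediate
        (U := {v | v ∉ l}) (S := {y})
      exact ⟨Y, hXY, (ih Y).mpr ⟨Z, hYZ.mono subset_union_right, hZ⟩⟩

theorem exs_append (l₁ l₂ : List ℕ) (φ : IncForm M) :
    exs l₁ (exs l₂ φ) = exs (l₁ ++ l₂) φ := by
  simp only [exs, List.foldr_append]

theorem tsat_bigAndI (l : List (IncForm M)) (X : Team M) :
    (bigAndI l).tsat X ↔ ∀ ψ ∈ l, ψ.tsat X := by
  induction l with
  | nil => simp [bigAndI, tsat, FOForm.sat]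
  | cons ψ l ih => exact (and_congr_right' ih).trans (List.forall_mem_cons (p := (tsat · X))).symm

end IncForm

theorem FOForm.sat_iffF (α β : FOForm M) (s : ℕ → M) :
    (iffF α β).sat s ↔ (α.sat s ↔ β.sat s) := by
  simp only [iffF, FOForm.sat]
  tauto

theorem FOForm.sat_eqAtom (u w : ℕ) (s : ℕ → M) : (eqAtom u w).sat s ↔ s u = s w := by
  simp [eqAtom, FOForm.sat]


namespace IncForm

variable {xs ys : List ℕ}

theorem tsat_incl_union {X Y : Team M} (hX : (incl xs ys).tsat X) (hY : (incl xs ys).tsat Y) :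
    (incl xs ys).tsat (X ∪ Y) := by
  rintro s (hs | hs)
  · obtain ⟨s', hs', h⟩ := hX s hs; exact ⟨s', Or.inl hs', h⟩
  · obtain ⟨s', hs', h⟩ := hY s hs; exact ⟨s', Or.inr hs', h⟩

theorem tsat_incl_append_of_map_eq {zs : List ℕ} {c : List M} {X : Team M}
    (h : (incl xs ys).tsat X) (hc : ∀ s ∈ X, zs.map s = c) :
    (incl (xs ++ zs) (ys ++ zs)).tsat X := by
  intro s hs
  obtain ⟨s', hs', heq⟩ := h s hs
  exact ⟨s', hs', by simp only [List.map_append, heq, hc s hs, hc s' hs']⟩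

theorem tsat_incl_sep_eq {p q : ℕ} {W : Team M} (hlen : xs.length = ys.length)
    (h : (incl (xs ++ [p, q]) (ys ++ [p, q])).tsat W) :
    (incl xs ys).tsat {w ∈ W | w p = w q} := by
  rintro w ⟨hw, hwpq⟩
  obtain ⟨w', hw', heq⟩ := h w hw
  simp only [List.map_append, List.map_cons, List.map_nil] at heq
  obtain ⟨hxy, hpq⟩ := List.append_inj heq (by simp [hlen])
  simp only [List.cons.injEq, and_true] at hpq
  exact ⟨w', ⟨hw', by rw [← hpq.1, ← hpq.2, hwpq]⟩, hxy⟩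

end IncForm

def setPair (p q : ℕ) (a : M) (s : ℕ → M) : ℕ → M := update (update s p a) q a

theorem setPair_eqOn (p q : ℕ) (a : M) (s : ℕ → M) : EqOn (setPair p q a s) s {p, q}ᶜ := by
  intro v hv
  obtain ⟨hvp, hvq⟩ : v ≠ p ∧ v ≠ q := by simpa [not_or] using hv
  simp [setPair, hvp, hvq]

def constOn (l : List ℕ) (a : M) (s : ℕ → M) : ℕ → M := fun v => if v ∈ l then a else s v

open Classical in
/-- Constant `x`-columns make the extended inclusion atoms hold trivially; `q = p` records the
truth of `α`. -/
noncomputable def encodeTruth (α : FOForm M) (x : List ℕ) (p q : ℕ) (a b : M) (s : ℕ → M) :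
    ℕ → M :=
  update (constOn (p :: x) a s) q (if α.sat (constOn (p :: x) a s) then a else b)

section encodeTruth

variable {α : FOForm M} {x : List ℕ} {p q : ℕ} {a b : M}

theorem encodeTruth_eqOn (s : ℕ → M) :
    EqOn (encodeTruth α x p q a b s) s {v | v ∉ x ++ [p, q]} := by
  intro v hv
  obtain ⟨hvx, hvp, hvq⟩ : v ∉ x ∧ v ≠ p ∧ v ≠ q := by simpa [not_or] using hv
  simp [encodeTruth, constOn, hvx, hvp, hvq]

theorem encodeTruth_of_mem (hqx : q ∉ x) (s : ℕ → M) {v : ℕ} (hv : v ∈ x) :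
    encodeTruth α x p q a b s v = a := by
  have hvq : v ≠ q := fun h => hqx (h ▸ hv)
  simp [encodeTruth, constOn, hvq, hv]

theorem sat_encodeTruth_iff (hab : a ≠ b) (hpq : p ≠ q) (hqα : q ∉ α.fv) (s : ℕ → M) :
    α.sat (encodeTruth α x p q a b s) ↔
      encodeTruth α x p q a b s p = encodeTruth α x p q a b s q := by
  have hα : α.sat (encodeTruth α x p q a b s) ↔ α.sat (constOn (p :: x) a s) :=
    α.sat_congr fun v hv => update_of_ne (fun h : v = q => hqα (h ▸ hv)) _ _
  rw [hα]
  by_cases h : α.sat (constOn (p :: x) a s) <;> simp [encodeTruth, constOn, hpq, h, hab]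

end encodeTruth

section Extension

open IncForm

variable {x : List ℕ} {incs : List (List ℕ × List ℕ)} {α : FOForm M} {φ : IncForm M} {p q : ℕ}

theorem exists_rhs_witness {a b : M} (hab : a ≠ b) (hpq : p ≠ q) (hpx : p ∉ x) (hqx : q ∉ x)
    (hsub : ∀ pr ∈ incs, (∀ v ∈ pr.1, v ∈ x) ∧ (∀ v ∈ pr.2, v ∈ x) ∧
      pr.1.length = pr.2.length)
    (hfα : α.fv ⊆ {p, q}ᶜ) (hfφ : φ.fv ⊆ {v | v ∉ x ++ [p, q]})
    {Y Y' Z : Team M} (hYY' : TeamEquiv {v | v ∉ x} Y Y')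
    (hincs : ∀ pr ∈ incs, (incl pr.1 pr.2).tsat Y') (hα : ∀ s ∈ Y', α.sat s)
    (hφ : φ.tsat Z) :
    ∃ W, TeamEquiv {v | v ∉ x ++ [p, q]} (Y ∪ Z) W ∧
      (∀ pr ∈ incs, (incl (pr.1 ++ [p, q]) (pr.2 ++ [p, q])).tsat W) ∧
      (∀ w ∈ W, α.sat w ↔ w p = w q) ∧
      ∃ W₁ W₂, W = W₁ ∪ W₂ ∧ (∀ w ∈ W₁, α.sat w) ∧ φ.tsat W₂ := by
  set W₁ := setPair p q a '' Y'
  set W₂ := encodeTruth α x p q a b '' Z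
  have hW₁ : TeamEquiv {p, q}ᶜ W₁ Y' := TeamEquiv.image_left (setPair_eqOn p q a) Y'
  have hW₂ : TeamEquiv {v | v ∉ x ++ [p, q]} W₂ Z := TeamEquiv.image_left encodeTruth_eqOn Z
  have hαW₁ : ∀ w ∈ W₁, α.sat w := tsat_of_teamEquiv (.fo α) hfα hW₁.symm hα
  refine ⟨W₁ ∪ W₂, ?_, fun pr hpr => ?_, ?_, W₁, W₂, rfl, hαW₁,
    tsat_of_teamEquiv φ hfφ hW₂.symm hφ⟩
  · refine ((hYY'.trans hW₁.symm).mono fun v hv => ?_).union hW₂.symm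
    simp_all
  · obtain ⟨h₁, h₂, hlen⟩ := hsub pr hpr
    have hfv : (incl pr.1 pr.2 : IncForm M).fv ⊆ {p, q}ᶜ := by
      rintro v (hv | hv) (rfl | rfl)
      exacts [hpx (h₁ v hv), hqx (h₁ v hv), hpx (h₂ v hv), hqx (h₂ v hv)]
    refine tsat_incl_union (tsat_incl_append_of_map_eq (c := [a, a])
      (tsat_of_teamEquiv _ hfv hW₁.symm (hincs pr hpr)) ?_) ?_
    · rintro _ ⟨s, -, rfl⟩
      simp [setPair, hpq]
    · rintro _ ⟨s, hs, rfl⟩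
      refine ⟨_, ⟨s, hs, rfl⟩, ?_⟩
      simp only [List.map_append]
      rw [List.map_eq_replicate_iff.mpr fun v hv => encodeTruth_of_mem hqx s (h₁ v hv),
        List.map_eq_replicate_iff.mpr fun v hv => encodeTruth_of_mem hqx s (h₂ v hv), hlen]
  · rintro w (hw | ⟨s, -, rfl⟩)
    · exact iff_of_true (hαW₁ w hw) (by obtain ⟨s, -, rfl⟩ := hw; simp [setPair, hpq])
    · exact sat_encodeTruth_iff hab hpq (fun h => hfα h (Or.inr rfl)) s

theorem exists_lhs_witness
    (hsub : ∀ pr ∈ incs, (∀ v ∈ pr.1, v ∈ x) ∧ (∀ v ∈ pr.2, v ∈ x) ∧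
      pr.1.length = pr.2.length)
    (hfα : α.fv ⊆ {p, q}ᶜ) (hfφ : φ.fv ⊆ {v | v ∉ x ++ [p, q]})
    {X W₁ W₂ : Team M} (hXW : TeamEquiv {v | v ∉ x ++ [p, q]} X (W₁ ∪ W₂))
    (hincs : ∀ pr ∈ incs, (incl (pr.1 ++ [p, q]) (pr.2 ++ [p, q])).tsat (W₁ ∪ W₂))
    (hiff : ∀ w ∈ W₁ ∪ W₂, α.sat w ↔ w p = w q) (hα : ∀ w ∈ W₁, α.sat w)
    (hφ : φ.tsat W₂) :
    ∃ Y Z, X = Y ∪ Z ∧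
      (∃ Y', TeamEquiv {v | v ∉ x} Y Y' ∧ (∀ pr ∈ incs, (incl pr.1 pr.2).tsat Y') ∧
        ∀ s ∈ Y', α.sat s) ∧ φ.tsat Z := by
  -- `W₀` is where `α` holds, and the extended atoms keep it closed under the original ones.
  set W₀ := {w ∈ W₁ ∪ W₂ | w p = w q}
  have hW₁₀ : W₁ ⊆ W₀ := fun w hw => ⟨Or.inl hw, (hiff w (Or.inl hw)).mp (hα w hw)⟩
  have hW₀ : W₁ ∪ W₂ = W₀ ∪ W₂ := subset_antisymm (union_subset_union_left _ hW₁₀)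
    (union_subset (sep_subset _ _) subset_union_right)
  obtain ⟨X₁, X₂, rfl, hX₁, hX₂⟩ := (hW₀ ▸ hXW).exists_union_eq
  obtain ⟨Y', hXY', hY'W₀⟩ := (hX₁.mono (U := {p, q}ᶜ \ {v | v ∈ x}) fun v hv => by
    simp_all).exists_intermediate
  refine ⟨X₁, X₂, rfl, ⟨Y', hXY', fun pr hpr => ?_, ?_⟩, tsat_of_teamEquiv φ hfφ hX₂.symm hφ⟩
  · obtain ⟨h₁, h₂, hlen⟩ := hsub pr hpr
    exact tsat_of_teamEquiv _ (fun v hv => Or.inl (hv.elim (h₁ v) (h₂ v))) hY'W₀.symm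
      (tsat_incl_sep_eq hlen (hincs pr hpr))
  · exact tsat_of_teamEquiv (.fo α) (hfα.trans subset_union_right) hY'W₀.symm
      fun w hw => (hiff w hw.1).mpr hw.2

end Extension

theorem ex_incl_extension_general (x : List ℕ) (incs : List (List ℕ × List ℕ))
    (α : FOForm M) (φ : IncForm M) (p q : ℕ) (X : Team M)
    (htwo : ∃ a b : M, a ≠ b)
    (hsub : ∀ pr ∈ incs, (∀ v ∈ pr.1, v ∈ x) ∧ (∀ v ∈ pr.2, v ∈ x) ∧
      pr.1.length = pr.2.length)
    (hxφ : ∀ v ∈ x, v ∉ IncForm.fv φ)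
    (hpq : p ≠ q) (hpx : p ∉ x) (hqx : q ∉ x)
    (hpα : p ∉ FOForm.fv α) (hqα : q ∉ FOForm.fv α)
    (hpφ : p ∉ IncForm.fv φ) (hqφ : q ∉ IncForm.fv φ) :
    IncForm.tsat
      (.or (IncForm.exs x
        (.and (bigAndI (incs.map fun pr => .incl pr.1 pr.2)) (.fo α))) φ) X ↔
    IncForm.tsat
      (IncForm.exs x (.ex p (.ex q (.and
        (bigAndI (incs.map fun pr => .incl (pr.1 ++ [p, q]) (pr.2 ++ [p, q])))
        (.and (.fo (iffF α (eqAtom p q))) (.or (.fo α) φ)))))) X := by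
  obtain ⟨a, b, hab⟩ := htwo
  have hfα : α.fv ⊆ {p, q}ᶜ := by rintro v hv (rfl | rfl) <;> contradiction
  have hfφ : φ.fv ⊆ {v | v ∉ x ++ [p, q]} := by
    intro v hv
    simpa [not_or] using ⟨fun h => hxφ v h hv, fun h => hpφ (h ▸ hv), fun h => hqφ (h ▸ hv)⟩
  rw [show ∀ ψ : IncForm M, IncForm.exs x (.ex p (.ex q ψ)) = IncForm.exs (x ++ [p, q]) ψ from
    IncForm.exs_append x [p, q]]
  simp only [IncForm.tsat, IncForm.tsat_exs_iff, IncForm.tsat_bigAndI, List.forall_mem_map,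
    FOForm.sat_iffF, FOForm.sat_eqAtom]
  constructor
  · rintro ⟨Y, Z, rfl, ⟨Y', hYY', hincs, hα⟩, hφ⟩
    exact exists_rhs_witness hab hpq hpx hqx hsub hfα hfφ hYY' hincs hα hφ
  · rintro ⟨_, hXW, hincs, hiff, W₁, W₂, rfl, hα, hφ⟩
    exact exists_lhs_witness hsub hfα hfφ hXW hincs hiff hα hφ

/-- the equivalence
`∃𝗑(⋀ᵢ ρⁱ_𝗑 ⊆ σⁱ_𝗑 ∧ α) ∨ φ ≡
 ∃𝗑∃p∃q(⋀ᵢ ρⁱ_𝗑 pq ⊆ σⁱ_𝗑 pq ∧ (α ↔ p=q) ∧ (α ∨ φ))`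
holds in team semantics, for fresh `p, q` and a model with ≥ 2 elements. -/
theorem ex_incl_extension (x : List ℕ) (incs : List (List ℕ × List ℕ))
    (α : FOForm M) (φ : IncForm M) (p q : ℕ) (X : Team M)
    (htwo : ∃ a b : M, a ≠ b)
    (hxnd : x.Nodup)
    (hsub : ∀ pr ∈ incs, (∀ v ∈ pr.1, v ∈ x) ∧ (∀ v ∈ pr.2, v ∈ x) ∧
      pr.1.length = pr.2.length)
    (hxφ : ∀ v ∈ x, v ∉ IncForm.fv φ)
    (hpq : p ≠ q) (hpx : p ∉ x) (hqx : q ∉ x)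
    (hpα : p ∉ FOForm.fv α) (hqα : q ∉ FOForm.fv α)
    (hpφ : p ∉ IncForm.fv φ) (hqφ : q ∉ IncForm.fv φ) :
    IncForm.tsat
      (.or (IncForm.exs x
        (.and (bigAndI (incs.map fun pr => .incl pr.1 pr.2)) (.fo α))) φ) X ↔
    IncForm.tsat
      (IncForm.exs x (.ex p (.ex q (.and
        (bigAndI (incs.map fun pr => .incl (pr.1 ++ [p, q]) (pr.2 ++ [p, q])))
        (.and (.fo (iffF α (eqAtom p q))) (.or (.fo α) φ)))))) X :=
  ex_incl_extension_general x incs α φ p q X htwo hsub hxφ hpq hpx hqx hpα hqα hpφ hqφ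

end TeamSem
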